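/- For all positive reals a and b, (√a - √b)² ≤ a * log(a/b) - a + b. -/
import Mathlib

theorem stmt_1 (a b : ℝ) (ha : 0 < a) (hb : 0 < b) :
    (Real.sqrt a - Real.sqrt b) ^ 2 ≤ a * Real.log (a / b) - a + b := by
  have hsa : (0:ℝ) < Real.sqrt a := Real.sqrt_pos.2 ha
  have hsb : (0:ℝ) < Real.sqrt b := Real.sqrt_pos.2 hb
  have hlog : Real.log (Real.sqrt b / Real.sqrt a) ≤ Real.sqrt b / Real.sqrt a - 1 :=
    Real.log_le_sub_one_of_pos (div_pos hsb hsa)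
  have hkey : 1 - Real.sqrt b / Real.sqrt a ≤ Real.log (Real.sqrt a / Real.sqrt b) := by
    have : Real.log (√a / √b) = - Real.log (√b / √a) := by
      rw [← Real.log_inv, inv_div]
    rw [this]; linarith
  have h2 : Real.log (a / b) = 2 * Real.log (Real.sqrt a / Real.sqrt b) := by
    rw [Real.log_div (ne_of_gt ha) (ne_of_gt hb),
        Real.log_div (ne_of_gt hsa) (ne_of_gt hsb),
        Real.log_sqrt ha.le, Real.log_sqrt hb.le]
    ring
  have hmul : a * (1 - Real.sqrt b / Real.sqrt a) ≤ a * Real.log (Real.sqrt a / Real.sqrt b) :=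
    mul_le_mul_of_nonneg_left hkey ha.le
  have hsq_a : Real.sqrt a * Real.sqrt a = a := Real.mul_self_sqrt ha.le
  have hsq_b : Real.sqrt b * Real.sqrt b = b := Real.mul_self_sqrt hb.le
  have hdiv : a * (Real.sqrt b / Real.sqrt a) = Real.sqrt a * Real.sqrt b := by
    field_simp
    nlinarith [hsq_a]
  nlinarith [hmul, hsq_a, hsq_b, hdiv, h2]
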